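/- For n ≤ 2, the slide order and componentwise order coincide: for monotone bead distributions A, B of n beads on [μ,∞) with n ∈ {1,2}, Aₖ ≤ Bₖ for all k implies B can be obtained from A by finitely many admissible bead slides. -/
import Mathlib


/-- `A` is a monotone bead distribution of `n` beads on `[μ,∞)`.
We use the convention `A 0 = μ`, so the beads are `A 1 < ⋯ < A n` with
`μ ≤ A 1` and nondecreasing successive gaps. -/
def BeadMono (n : ℕ) (μ : ℝ) (A : ℕ → ℝ) : Prop :=
  A 0 = μ ∧ A 0 ≤ A 1 ∧
  (∀ k, 2 ≤ k → k ≤ n → A (k - 1) < A k) ∧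
  (∀ k, 2 ≤ k → k ≤ n → A (k - 1) - A (k - 2) ≤ A k - A (k - 1))

/-- One admissible bead slide: move the `k`-th bead to the right by `δ ≥ 0`
so that the result is again monotone. -/
def BeadSlide (n : ℕ) (μ : ℝ) (A B : ℕ → ℝ) : Prop :=
  ∃ k δ, 1 ≤ k ∧ k ≤ n ∧ 0 ≤ δ ∧
    B = Function.update A k (A k + δ) ∧ BeadMono n μ B

/-- `BeadReach n μ A B`: `B` is obtained from `A` by finitely many admissible slides. -/
def BeadReach (n : ℕ) (μ : ℝ) : (ℕ → ℝ) → (ℕ → ℝ) → Prop :=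
  Relation.ReflTransGen (BeadSlide n μ)

lemma bead_update_eq (A : ℕ → ℝ) (k : ℕ) (v : ℝ) :
    Function.update A k v = Function.update A k (A k + (v - A k)) := by
  norm_num

/-- for `n ≤ 2` the slide order coincides with the componentwise
order on monotone bead distributions. -/
theorem slide_eq_le_of_small (n : ℕ) (hn : n ≤ 2) (μ : ℝ) (A B : ℕ → ℝ)
    (hA : BeadMono n μ A) (hB : BeadMono n μ B)
    (hle : ∀ k, 1 ≤ k → k ≤ n → A k ≤ B k) :
    ∃ C : ℕ → ℝ, BeadReach n μ A C ∧ ∀ k, k ≤ n → C k = B k := by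
  obtain ⟨hA0, hA01, hAlt, hAgap⟩ := hA
  obtain ⟨hB0, hB01, hBlt, hBgap⟩ := hB
  interval_cases n
  · refine ⟨A, Relation.ReflTransGen.refl, fun k hk => ?_⟩
    interval_cases k
    rw [hA0, hB0]
  · -- n = 1
    have h1 : A 1 ≤ B 1 := hle 1 le_rfl le_rfl
    refine ⟨Function.update A 1 (B 1), Relation.ReflTransGen.single ?_, ?_⟩
    · refine ⟨1, B 1 - A 1, le_rfl, le_rfl, by linarith, bead_update_eq A 1 (B 1), ?_⟩
      refine ⟨by simp [hA0], by simp [hA0]; linarith, ?_, ?_⟩ <;>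
        · intro k h2 h1'; omega
    · intro k hk
      interval_cases k
      · simp [hA0, hB0]
      · simp
  · -- n = 2
    have h1 : A 1 ≤ B 1 := hle 1 le_rfl (by norm_num)
    have h2 : A 2 ≤ B 2 := hle 2 (by norm_num) le_rfl
    have hAlt2 := hAlt 2 le_rfl le_rfl
    have hAgap2 := hAgap 2 le_rfl le_rfl
    have hBlt2 := hBlt 2 le_rfl le_rfl
    have hBgap2 := hBgap 2 le_rfl le_rfl
    simp only [show (2:ℕ) - 1 = 1 from rfl, show (2:ℕ) - 2 = 0 from rfl] at *
    set A' := Function.update A 2 (B 2) with hA'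
    have hA'0 : A' 0 = A 0 := by simp [hA']
    have hA'1 : A' 1 = A 1 := by simp [hA']
    have hA'2 : A' 2 = B 2 := by simp [hA']
    have stepA' : BeadSlide 2 μ A A' := by
      refine ⟨2, B 2 - A 2, by norm_num, le_rfl, by linarith, bead_update_eq A 2 (B 2), ?_⟩
      refine ⟨by rw [hA'0, hA0], by rw [hA'0, hA'1]; exact hA01, ?_, ?_⟩ <;>
        · intro k hk2 hk2'
          have : k = 2 := by omega
          subst this
          simp only [show (2:ℕ) - 1 = 1 from rfl, show (2:ℕ) - 2 = 0 from rfl,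
            hA'0, hA'1, hA'2]
          linarith
    set C := Function.update A' 1 (B 1) with hC
    have hC0 : C 0 = A 0 := by simp [hC, hA'0]
    have hC1 : C 1 = B 1 := by simp [hC]
    have hC2 : C 2 = B 2 := by simp [hC, hA'2]
    have stepC : BeadSlide 2 μ A' C := by
      refine ⟨1, B 1 - A' 1, le_rfl, by norm_num, by rw [hA'1]; linarith,
        bead_update_eq A' 1 (B 1), ?_⟩
      refine ⟨by rw [hC0, hA0], by rw [hC0, hC1, hA0, ← hB0]; exact hB01, ?_, ?_⟩ <;>
        · intro k hk2 hk2'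
          have : k = 2 := by omega
          subst this
          simp only [show (2:ℕ) - 1 = 1 from rfl, show (2:ℕ) - 2 = 0 from rfl,
            hC0, hC1, hC2, hA0, ← hB0]
          linarith
    refine ⟨C, Relation.ReflTransGen.single stepA' |>.tail stepC, fun k hk => ?_⟩
    interval_cases k
    · rw [hC0, hA0, hB0]
    · exact hC1
    · exact hC2
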